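/- Let (Z, 𝒵, μ) be a finite measure space with 0 < μ(Z) < ∞, let N ∈ (0,∞), and let g : Z → [0,∞) be measurable with ∫_Z l(g) dμ ≤ N and m := ∫_Z g dμ ∈ (0,∞). Let μ̃ be the probability measure with density g/m with respect to μ, and let θ = μ/μ(Z). Then the relative entropy (Kullback–Leibler divergence) satisfies R(μ̃ ‖ θ) ≤ N/m + 1 − μ(Z)/m + log(μ(Z)/m). -/

import Mathlib

open MeasureTheory Set
open scoped ENNReal

/-- `l(r) = r·log r − r + 1` (note `Real.log 0 = 0` in Mathlib, so `ell 0 = 1`). -/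
noncomputable def ell (r : ℝ) : ℝ := r * Real.log r - r + 1

/-! The density of `μ̃` with respect to `θ` is `μ(Z)·g/m`, so
`R(μ̃ ‖ θ) = (1/m) ∫ g log g dμ + log (μ(Z)/m)`; and `g log g = l(g) + g − 1` integrates to at most
`N + m − μ(Z)`. -/

open Real InformationTheory

lemma ell_eq_klFun : ell = klFun := by
  funext r
  rw [ell, klFun_apply]
  ring

lemma ell_nonneg {r : ℝ} (hr : 0 ≤ r) : 0 ≤ ell r :=
  ell_eq_klFun ▸ klFun_nonneg hr

lemma measurable_ell : Measurable ell :=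
  ell_eq_klFun ▸ measurable_klFun

lemma div_mul_log_mul_div {c m : ℝ} (hc : c ≠ 0) (hm : m ≠ 0) (r : ℝ) :
    r / m * log (c * (r / m)) = (ell r + (1 + log (c / m)) * r - 1) / m := by
  rcases eq_or_ne r 0 with rfl | hr
  · simp [ell]
  rw [show c * (r / m) = c / m * r by ring, log_mul (div_ne_zero hc hm) hr, ell]
  field_simp
  ring

section

variable {α : Type*} [MeasurableSpace α] {μ : Measure α}

lemma integrable_of_lintegral_ofReal_ne_top {f : α → ℝ} (hf : AEStronglyMeasurable f μ)
    (hf0 : 0 ≤ᵐ[μ] f) (h : ∫⁻ x, ENNReal.ofReal (f x) ∂μ ≠ ∞) : Integrable f μ :=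
  ⟨hf, (hasFiniteIntegral_iff_ofReal hf0).2 h.lt_top⟩

lemma integral_le_of_lintegral_ofReal_le {f : α → ℝ} (hf : AEStronglyMeasurable f μ)
    (hf0 : 0 ≤ᵐ[μ] f) {N : ℝ} (hN : 0 ≤ N) (h : ∫⁻ x, ENNReal.ofReal (f x) ∂μ ≤ ENNReal.ofReal N) :
    ∫ x, f x ∂μ ≤ N := by
  rw [integral_eq_lintegral_of_nonneg_ae hf0 hf]
  exact ENNReal.toReal_le_of_le_ofReal hN h

lemma integral_eq_of_lintegral_ofReal_eq {f : α → ℝ} (hf : AEStronglyMeasurable f μ)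
    (hf0 : 0 ≤ᵐ[μ] f) {m : ℝ} (hm : 0 ≤ m) (h : ∫⁻ x, ENNReal.ofReal (f x) ∂μ = ENNReal.ofReal m) :
    ∫ x, f x ∂μ = m := by
  rw [integral_eq_lintegral_of_nonneg_ae hf0 hf, h, ENNReal.toReal_ofReal hm]

lemma integral_llr_withDensity_ofReal_smul [SigmaFinite μ] {h : α → ℝ} (hh : Measurable h)
    (hh0 : 0 ≤ᵐ[μ] h) {c : ℝ≥0∞} (hc0 : c ≠ 0) (hc : c ≠ ∞) :
    ∫ x, llr (μ.withDensity fun x => ENNReal.ofReal (h x)) (c • μ) x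
        ∂(μ.withDensity fun x => ENNReal.ofReal (h x))
      = ∫ x, h x * log (c⁻¹.toReal * h x) ∂μ := by
  rw [integral_withDensity_eq_integral_toReal_smul hh.ennreal_ofReal
    (ae_of_all _ fun _ => ENNReal.ofReal_lt_top)]
  refine integral_congr_ae ?_
  filter_upwards [Measure.rnDeriv_smul_right_of_ne_top'
      (μ.withDensity fun x => ENNReal.ofReal (h x)) μ hc0 hc,
    Measure.rnDeriv_withDensity μ hh.ennreal_ofReal, hh0] with x hsmul hdens hx
  simp [llr, hsmul, hdens, ENNReal.toReal_ofReal hx]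

lemma integral_div_mul_log_mul_div [IsFiniteMeasure μ] {g : α → ℝ} (hg : Integrable g μ)
    (hell : Integrable (fun x => ell (g x)) μ) {c m : ℝ} (hc : c ≠ 0) (hm : m ≠ 0) :
    ∫ x, g x / m * log (c * (g x / m)) ∂μ
      = (∫ x, ell (g x) ∂μ + (1 + log (c / m)) * ∫ x, g x ∂μ - μ.real univ) / m := by
  have hsum : Integrable (fun x => ell (g x) + (1 + log (c / m)) * g x) μ :=
    hell.add (hg.const_mul _)
  simp_rw [div_mul_log_mul_div hc hm]
  rw [integral_div, integral_sub hsum (integrable_const 1), integral_add hell (hg.const_mul _),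
    integral_const_mul, integral_const, smul_eq_mul, mul_one]

end

/-- Let `(Z, μ)` be a finite measure space with `0 < μ(Z) < ∞`,
`N ∈ (0,∞)`, and `g ≥ 0` measurable with `∫ l(g) dμ ≤ N` and `m = ∫ g dμ ∈ (0,∞)`.
Let `μ̃` be the probability measure with density `g/m` w.r.t. `μ` and `θ = μ/μ(Z)`.
Then `μ̃ ≪ θ` and the relative entropy `R(μ̃‖θ) = ∫ log(dμ̃/dθ) dμ̃` satisfies
`R(μ̃‖θ) ≤ N/m + 1 − μ(Z)/m + log(μ(Z)/m)`. -/
theorem relative_entropy_bound_of_cost_bound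
    {Z : Type*} [MeasurableSpace Z] (μ : Measure Z) [IsFiniteMeasure μ]
    (hμpos : 0 < μ Set.univ)
    (N : ℝ) (hN : 0 < N)
    (g : Z → ℝ) (hgmeas : Measurable g) (hgnonneg : ∀ z, 0 ≤ g z)
    (hcost : ∫⁻ z, ENNReal.ofReal (ell (g z)) ∂μ ≤ ENNReal.ofReal N)
    (m : ℝ) (hm : 0 < m)
    (hmass : ∫⁻ z, ENNReal.ofReal (g z) ∂μ = ENNReal.ofReal m) :
    μ.withDensity (fun z => ENNReal.ofReal (g z / m)) ≪ (μ Set.univ)⁻¹ • μ ∧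
      ∫ z, Real.log
          (((μ.withDensity (fun z => ENNReal.ofReal (g z / m))).rnDeriv
            ((μ Set.univ)⁻¹ • μ) z).toReal)
          ∂(μ.withDensity (fun z => ENNReal.ofReal (g z / m)))
        ≤ N / m + 1 - (μ Set.univ).toReal / m + Real.log ((μ Set.univ).toReal / m) := by
  have hμ_ne_top : μ Set.univ ≠ ⊤ := measure_ne_top μ _
  have hinv0 : (μ Set.univ)⁻¹ ≠ 0 := ENNReal.inv_ne_zero.2 hμ_ne_top
  refine ⟨(withDensity_absolutelyContinuous μ _).trans (Measure.absolutelyContinuous_smul hinv0),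
    ?_⟩
  have hg0 : 0 ≤ᵐ[μ] g := ae_of_all _ hgnonneg
  have hell0 : 0 ≤ᵐ[μ] fun z => ell (g z) := ae_of_all _ fun z => ell_nonneg (hgnonneg z)
  have hell_meas : AEStronglyMeasurable (fun z => ell (g z)) μ :=
    (measurable_ell.comp hgmeas).aestronglyMeasurable
  have hg_int : Integrable g μ := integrable_of_lintegral_ofReal_ne_top
    hgmeas.aestronglyMeasurable hg0 (hmass ▸ ENNReal.ofReal_ne_top)
  have hell_int : Integrable (fun z => ell (g z)) μ := integrable_of_lintegral_ofReal_ne_top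
    hell_meas hell0 (ne_top_of_le_ne_top ENNReal.ofReal_ne_top hcost)
  set c := (μ Set.univ).toReal
  have hc : c ≠ 0 := (ENNReal.toReal_pos hμpos.ne' hμ_ne_top).ne'
  calc _ = ∫ z, g z / m * log (c * (g z / m)) ∂μ :=
        (integral_llr_withDensity_ofReal_smul (hgmeas.div_const m)
          (ae_of_all _ fun z => div_nonneg (hgnonneg z) hm.le) hinv0
          (by simpa using hμpos.ne')).trans (by rw [inv_inv])
    _ = (∫ z, ell (g z) ∂μ + (1 + log (c / m)) * ∫ z, g z ∂μ - c) / m :=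
        integral_div_mul_log_mul_div hg_int hell_int hc hm.ne'
    _ ≤ (N + (1 + log (c / m)) * m - c) / m := by
        rw [integral_eq_of_lintegral_ofReal_eq hgmeas.aestronglyMeasurable hg0 hm.le hmass]
        gcongr
        exact integral_le_of_lintegral_ofReal_le hell_meas hell0 hN.le hcost
    _ = N / m + 1 - c / m + log (c / m) := by field_simp; ring
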